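/- arXiv:2604.10993 — 2 statements merged into one kernel-verified Lean document; each statement's English description precedes it below -/
import Mathlib

section
/- Suppose z : [t_k, ∞) → ℝⁿ is differentiable with ‖z'(t)‖ ≤ L for all t, and define e(t) = z(t_k) - z(t). If at time t we have ‖e(t)‖² ≥ δ·‖z(t)‖² and ‖z(t)‖ ≥ ε, then t - t_k ≥ √δ·ε/L. (Positive lower bound on inter-event times when the error is above the threshold.) -/
theorem inter_event_time_lower_bound {n : ℕ} (L δ ε tk : ℝ)
    (hL : 0 < L) (hδ : δ ∈ Set.Ioo (0 : ℝ) 1) (hε : 0 < ε)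
    (z : ℝ → EuclideanSpace ℝ (Fin n)) (hz : Differentiable ℝ z)
    (hderiv : ∀ t ≥ tk, ‖deriv z t‖ ≤ L)
    (e : ℝ → EuclideanSpace ℝ (Fin n)) (he : ∀ t, e t = z tk - z t)
    (t : ℝ) (ht : tk ≤ t)
    (htrig : δ * ‖z t‖ ^ 2 ≤ ‖e t‖ ^ 2) (hzt : ε ≤ ‖z t‖) :
    Real.sqrt δ * ε / L ≤ t - tk := by
  have hmvt : ‖z t - z tk‖ ≤ L * (t - tk) := by
    apply norm_image_sub_le_of_norm_deriv_le_segment'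
      (f' := deriv z) (fun x hx => (hz x).hasDerivAt.hasDerivWithinAt)
      (fun x hx => hderiv x hx.1) t (Set.right_mem_Icc.mpr ht)
  have he' : ‖e t‖ ≤ L * (t - tk) := by
    rw [he, ← norm_neg]; simpa using hmvt
  have hsq : Real.sqrt δ * ‖z t‖ ≤ ‖e t‖ := by
    have := Real.sqrt_le_sqrt htrig
    rwa [Real.sqrt_mul hδ.1.le, Real.sqrt_sq (norm_nonneg _),
      Real.sqrt_sq (norm_nonneg _)] at this
  have hδ0 : 0 < Real.sqrt δ := Real.sqrt_pos.mpr hδ.1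
  have : Real.sqrt δ * ε ≤ L * (t - tk) := by
    calc Real.sqrt δ * ε ≤ Real.sqrt δ * ‖z t‖ := by nlinarith
    _ ≤ ‖e t‖ := hsq
    _ ≤ _ := he'
  rw [div_le_iff₀ hL] at *
  linarith
end

section
/- If d : ℝ → ℝ is differentiable with d(0) ∈ (d_min, d_max) and the transformed state s(t) = ln((d(t) - d_min)/(d_max - d(t))) remains bounded by M on the maximal interval where d(t) ∈ (d_min, d_max), then d(t) never reaches the boundary: d(t) ∈ (d_min, d_max) for all t ≥ 0 (assuming d is continuous on [0, ∞)). -/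
theorem state_never_reaches_boundary (dmin dmax M : ℝ) (h : dmin < dmax) (hM : 0 ≤ M)
    (d : ℝ → ℝ) (hcont : ContinuousOn d (Set.Ici 0))
    (h0 : d 0 ∈ Set.Ioo dmin dmax)
    (hbound : ∀ t ≥ (0 : ℝ), (∀ s ∈ Set.Icc (0 : ℝ) t, d s ∈ Set.Ioo dmin dmax) →
      |Real.log ((d t - dmin) / (dmax - d t))| ≤ M) :
    ∀ t ≥ (0 : ℝ), d t ∈ Set.Ioo dmin dmax := by
  by_contra hcon
  push_neg at hcon
  obtain ⟨t₀, ht₀, hd₀⟩ := hcon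
  set e1 := Real.exp (-M) with he1
  set e2 := Real.exp M with he2
  have he1pos : 0 < e1 := Real.exp_pos _
  have he2pos : 0 < e2 := Real.exp_pos _
  set a := (dmin + e1 * dmax) / (1 + e1) with ha
  set b := (dmin + e2 * dmax) / (1 + e2) with hb
  have ha_gt : dmin < a := by
    rw [ha, lt_div_iff₀ (by linarith)]
    nlinarith
  have hb_lt : b < dmax := by
    rw [hb, div_lt_iff₀ (by linarith)]
    nlinarith
  -- key estimate: if bound holds at t and d t ∈ Ioo, then d t ∈ Icc a b
  have key : ∀ t : ℝ, d t ∈ Set.Ioo dmin dmax →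
      |Real.log ((d t - dmin) / (dmax - d t))| ≤ M → d t ∈ Set.Icc a b := by
    intro t hmem hlog
    obtain ⟨h1, h2⟩ := hmem
    have hnum : 0 < d t - dmin := by linarith
    have hden : 0 < dmax - d t := by linarith
    have hrpos : 0 < (d t - dmin) / (dmax - d t) := div_pos hnum hden
    rw [abs_le] at hlog
    have hlo : e1 ≤ (d t - dmin) / (dmax - d t) := by
      rw [he1]
      calc Real.exp (-M) ≤ Real.exp (Real.log ((d t - dmin) / (dmax - d t))) :=
            Real.exp_le_exp.mpr hlog.1
        _ = _ := Real.exp_log hrpos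
    have hhi : (d t - dmin) / (dmax - d t) ≤ e2 := by
      rw [he2]
      calc (d t - dmin) / (dmax - d t) = Real.exp (Real.log ((d t - dmin) / (dmax - d t))) :=
            (Real.exp_log hrpos).symm
        _ ≤ Real.exp M := Real.exp_le_exp.mpr hlog.2
    rw [le_div_iff₀ hden] at hlo
    rw [div_le_iff₀ hden] at hhi
    constructor
    · rw [ha, div_le_iff₀ (by linarith)]; nlinarith
    · rw [hb, le_div_iff₀ (by linarith)]; nlinarith
  -- the set of bad times
  set A := {t : ℝ | t ∈ Set.Ici (0:ℝ) ∧ d t ∉ Set.Ioo dmin dmax} with hA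
  have hAne : A.Nonempty := ⟨t₀, ht₀, hd₀⟩
  have hAbdd : BddBelow A := ⟨0, fun x hx => hx.1⟩
  have hAclosed : IsClosed A := by
    have : A = Set.Ici (0:ℝ) ∩ d ⁻¹' (Set.Ioo dmin dmax)ᶜ := rfl
    rw [this]
    exact ContinuousOn.preimage_isClosed_of_isClosed hcont isClosed_Ici
      (isOpen_Ioo.isClosed_compl)
  set T := sInf A with hT
  have hTmem : T ∈ A := hAclosed.csInf_mem hAne hAbdd
  have hT0 : 0 ≤ T := hTmem.1
  have hTpos : 0 < T := by
    rcases lt_or_eq_of_le hT0 with h' | h'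
    · exact h'
    · exact absurd h0 (h' ▸ hTmem.2)
  -- all s ∈ [0, T) are good
  have hgood : ∀ s ∈ Set.Ico (0:ℝ) T, d s ∈ Set.Ioo dmin dmax := by
    intro s hs
    by_contra hbad
    exact absurd (csInf_le hAbdd ⟨hs.1, hbad⟩) (not_le.mpr hs.2)
  -- so for t ∈ [0, T), d t ∈ Icc a b
  have hicc : ∀ t ∈ Set.Ico (0:ℝ) T, d t ∈ Set.Icc a b := by
    intro t ht
    refine key t (hgood t ht) (hbound t ht.1 ?_)
    intro s hs
    exact hgood s ⟨hs.1, lt_of_le_of_lt hs.2 ht.2⟩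
  -- d T is a limit of values in Icc a b
  have hcw : ContinuousWithinAt d (Set.Ico 0 T) T := by
    exact ContinuousWithinAt.mono (hcont T hT0) Set.Ico_subset_Ici_self
  have hne : (nhdsWithin T (Set.Ico 0 T)).NeBot := by
    apply mem_closure_iff_nhdsWithin_neBot.mp
    rw [closure_Ico (ne_of_lt hTpos)]
    exact ⟨hT0, le_refl T⟩
  have hdT : d T ∈ Set.Icc a b := by
    refine isClosed_Icc.mem_of_tendsto hcw ?_
    filter_upwards [self_mem_nhdsWithin] with t ht using hicc t ht
  exact hTmem.2 ⟨lt_of_lt_of_le ha_gt hdT.1, lt_of_le_of_lt hdT.2 hb_lt⟩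
end
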